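/- arXiv:1807.03435 — 8 statements merged into one kernel-verified Lean document; each statement's English description precedes it below -/
import Mathlib

section
/- If z_1, ..., z_n are independent Bernoulli random variables with P[z_i = 1] = s_i summing to s, and Z is their sum, then 2·P[Z = 0] + P[Z = 1] ≤ 2(1 - s/n)^n + s(1 - s/n)^{n-1}. -/
/-!
Write `p i = P[z i = 1]`. Then `2 P[Z = 0] + P[Z = 1] = E[(2 - Z)⁺]` is an explicit polynomial in
the `p i`, and singling out two coordinates `i ≠ j` it reads
`(2 - (p i + p j)) P[Z' = 0] + (1 - (p i + p j) + p i p j) P[Z' = 1]`, where `Z'` is the sum of the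
other coordinates. For a fixed value of `p i + p j` it is therefore nondecreasing in `p i p j`.
Smoothing a pair `p i < m < p j` (with `m` the mean of the `p k`) to `m, p i + p j - m` keeps the
sum, increases the product and makes one more coordinate equal to `m`; after finitely many such
steps all coordinates equal `m`, which gives the binomial right-hand side.
-/

open MeasureTheory ProbabilityTheory Finset

section SuccessProb

variable {ι : Type*}

/-- `P[Z = 0]` for `Z` a sum of independent Bernoulli(`p i`) variables, `i ∈ s`. -/
def noSuccessProb (s : Finset ι) (p : ι → ℝ) : ℝ := ∏ i ∈ s, (1 - p i)

lemma noSuccessProb_congr {s : Finset ι} {p q : ι → ℝ} (h : ∀ i ∈ s, p i = q i) :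
    noSuccessProb s p = noSuccessProb s q :=
  prod_congr rfl fun i hi => by rw [h i hi]

lemma noSuccessProb_const (s : Finset ι) (m : ℝ) :
    noSuccessProb s (fun _ => m) = (1 - m) ^ #s :=
  prod_const _

variable [DecidableEq ι]

/-- `P[Z = 1]` for `Z` a sum of independent Bernoulli(`p i`) variables, `i ∈ s`. -/
def oneSuccessProb (s : Finset ι) (p : ι → ℝ) : ℝ := ∑ i ∈ s, p i * ∏ j ∈ s.erase i, (1 - p j)

lemma oneSuccessProb_congr {s : Finset ι} {p q : ι → ℝ} (h : ∀ i ∈ s, p i = q i) :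
    oneSuccessProb s p = oneSuccessProb s q :=
  sum_congr rfl fun i hi => by
    rw [h i hi, prod_congr rfl fun j hj => by rw [h j (mem_of_mem_erase hj)]]

lemma oneSuccessProb_const (s : Finset ι) (m : ℝ) :
    oneSuccessProb s (fun _ => m) = #s * (m * (1 - m) ^ (#s - 1)) := by
  rw [oneSuccessProb, ← nsmul_eq_mul, ← sum_const]
  exact sum_congr rfl fun i hi => by rw [prod_const, card_erase_of_mem hi]

lemma oneSuccessProb_nonneg {s : Finset ι} {p : ι → ℝ} (hp : ∀ i ∈ s, p i ∈ Set.Icc 0 1) :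
    0 ≤ oneSuccessProb s p :=
  sum_nonneg fun i hi => mul_nonneg (hp i hi).1 <| prod_nonneg fun j hj =>
    sub_nonneg.2 (hp j (mem_of_mem_erase hj)).2

lemma noSuccessProb_eq_mul_erase {s : Finset ι} {i : ι} (hi : i ∈ s) (p : ι → ℝ) :
    noSuccessProb s p = (1 - p i) * noSuccessProb (s.erase i) p :=
  (mul_prod_erase s _ hi).symm

lemma oneSuccessProb_eq_erase {s : Finset ι} {i : ι} (hi : i ∈ s) (p : ι → ℝ) :
    oneSuccessProb s p
      = p i * noSuccessProb (s.erase i) p + (1 - p i) * oneSuccessProb (s.erase i) p := by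
  rw [oneSuccessProb, ← add_sum_erase s _ hi, oneSuccessProb, mul_sum]
  congr 1
  refine sum_congr rfl fun j hj => ?_
  rw [← mul_prod_erase (s.erase j) _ (mem_erase.2 ⟨(ne_of_mem_erase hj).symm, hi⟩),
    erase_right_comm]
  ring

lemma two_mul_noSuccessProb_add_oneSuccessProb_eq_of_mem {s : Finset ι} {i j : ι} (hi : i ∈ s)
    (hj : j ∈ s) (hij : i ≠ j) (p : ι → ℝ) :
    2 * noSuccessProb s p + oneSuccessProb s p
      = (2 - (p i + p j)) * noSuccessProb ((s.erase i).erase j) p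
        + (1 - (p i + p j) + p i * p j) * oneSuccessProb ((s.erase i).erase j) p := by
  have hj' : j ∈ s.erase i := mem_erase.2 ⟨hij.symm, hj⟩
  rw [noSuccessProb_eq_mul_erase hi, oneSuccessProb_eq_erase hi, noSuccessProb_eq_mul_erase hj',
    oneSuccessProb_eq_erase hj']
  ring

lemma two_mul_noSuccessProb_add_oneSuccessProb_le_of_pair {s : Finset ι} {p q : ι → ℝ}
    (hp : ∀ k ∈ s, p k ∈ Set.Icc 0 1) {i j : ι} (hi : i ∈ s) (hj : j ∈ s) (hij : i ≠ j)
    (hq : ∀ k ∈ (s.erase i).erase j, q k = p k) (hsum : q i + q j = p i + p j)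
    (hprod : p i * p j ≤ q i * q j) :
    2 * noSuccessProb s p + oneSuccessProb s p ≤ 2 * noSuccessProb s q + oneSuccessProb s q := by
  rw [two_mul_noSuccessProb_add_oneSuccessProb_eq_of_mem hi hj hij p,
    two_mul_noSuccessProb_add_oneSuccessProb_eq_of_mem hi hj hij q, noSuccessProb_congr hq,
    oneSuccessProb_congr hq, hsum]
  have := oneSuccessProb_nonneg (s := (s.erase i).erase j) fun k hk =>
    hp k (mem_of_mem_erase (mem_of_mem_erase hk))
  linarith [mul_le_mul_of_nonneg_right hprod this]

omit [DecidableEq ι] in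
lemma exists_lt_and_lt_of_sum_eq {s : Finset ι} {p : ι → ℝ} {m : ℝ}
    (hsum : ∑ i ∈ s, p i = #s * m) (hne : ∃ k ∈ s, p k ≠ m) :
    ∃ i ∈ s, ∃ j ∈ s, p i < m ∧ m < p j := by
  have h₁ : ∑ i ∈ s, (p i - m) = 0 := by simp [sum_sub_distrib, hsum]
  have h₂ : ∑ i ∈ s, (m - p i) = 0 := by simp [sum_sub_distrib, hsum]
  obtain ⟨k, hk, hpk⟩ := hne
  obtain ⟨i, hi, hpi⟩ :=
    exists_pos_of_sum_zero_of_exists_nonzero _ h₂ ⟨k, hk, sub_ne_zero.2 hpk.symm⟩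
  obtain ⟨j, hj, hpj⟩ := exists_pos_of_sum_zero_of_exists_nonzero _ h₁ ⟨k, hk, sub_ne_zero.2 hpk⟩
  exact ⟨i, hi, j, hj, sub_pos.1 hpi, sub_pos.1 hpj⟩

lemma exists_smoothing_step {s : Finset ι} {p : ι → ℝ} {m : ℝ}
    (hp : ∀ i ∈ s, p i ∈ Set.Icc 0 1) (hsum : ∑ i ∈ s, p i = #s * m) (hne : ∃ k ∈ s, p k ≠ m) :
    ∃ q : ι → ℝ, (∀ i ∈ s, q i ∈ Set.Icc 0 1) ∧ ∑ i ∈ s, q i = #s * m ∧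
      #{i ∈ s | q i ≠ m} < #{i ∈ s | p i ≠ m} ∧
      2 * noSuccessProb s p + oneSuccessProb s p ≤ 2 * noSuccessProb s q + oneSuccessProb s q := by
  obtain ⟨i, hi, j, hj, hpi, hpj⟩ := exists_lt_and_lt_of_sum_eq hsum hne
  have hij : i ≠ j := by rintro rfl; linarith
  set q := Function.update (Function.update p i m) j (p i + p j - m) with hq_def
  have hqi : q i = m := by simp [hq_def, hij]
  have hqj : q j = p i + p j - m := by simp [hq_def]
  have hq : ∀ k, k ≠ i → k ≠ j → q k = p k := fun k hki hkj => by simp [hq_def, hki, hkj]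
  have hq' : ∀ k ∈ (s.erase i).erase j, q k = p k := fun k hk =>
    hq k (ne_of_mem_erase (mem_of_mem_erase hk)) (ne_of_mem_erase hk)
  refine ⟨q, fun k hk => ?_, ?_, ?_, two_mul_noSuccessProb_add_oneSuccessProb_le_of_pair hp hi hj
    hij hq' (by rw [hqi, hqj]; ring) (by rw [hqi, hqj]; nlinarith)⟩
  · by_cases hki : k = i
    · subst hki; exact ⟨by linarith [(hp k hk).1], by linarith [(hp j hj).2]⟩
    by_cases hkj : k = j
    · subst hkj; rw [hqj]; exact ⟨by linarith [(hp i hi).1], by linarith [(hp k hk).2]⟩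
    rw [hq k hki hkj]; exact hp k hk
  · have hj' : j ∈ s.erase i := mem_erase.2 ⟨hij.symm, hj⟩
    rw [← hsum, ← add_sum_erase s q hi, ← add_sum_erase _ q hj', ← add_sum_erase s p hi,
      ← add_sum_erase _ p hj', hqi, hqj, sum_congr rfl hq']
    ring
  · have hi' : i ∈ {k ∈ s | p k ≠ m} := mem_filter.2 ⟨hi, hpi.ne⟩
    refine (card_le_card fun k hk => ?_).trans_lt (card_erase_lt_of_mem hi')
    obtain ⟨hks, hqk⟩ := mem_filter.1 hk
    have hki : k ≠ i := by rintro rfl; exact hqk hqi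
    refine mem_erase.2 ⟨hki, mem_filter.2 ⟨hks, ?_⟩⟩
    by_cases hkj : k = j
    · subst hkj; exact hpj.ne'
    · rwa [← hq k hki hkj]

lemma two_mul_noSuccessProb_add_oneSuccessProb_le_const {s : Finset ι} {p : ι → ℝ} {m : ℝ}
    (hp : ∀ i ∈ s, p i ∈ Set.Icc 0 1) (hsum : ∑ i ∈ s, p i = #s * m) :
    2 * noSuccessProb s p + oneSuccessProb s p
      ≤ 2 * noSuccessProb s (fun _ => m) + oneSuccessProb s (fun _ => m) := by
  induction hN : #{i ∈ s | p i ≠ m} using Nat.strong_induction_on generalizing p with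
  | _ N ih =>
  by_cases hall : ∀ i ∈ s, p i = m
  · rw [noSuccessProb_congr hall, oneSuccessProb_congr hall]
  push Not at hall
  obtain ⟨q, hq01, hqsum, hcard, hle⟩ := exists_smoothing_step hp hsum hall
  exact hle.trans (ih _ (hN ▸ hcard) hq01 hqsum rfl)

theorem two_mul_noSuccessProb_add_oneSuccessProb_le (s : Finset ι) {p : ι → ℝ}
    (hp : ∀ i ∈ s, p i ∈ Set.Icc 0 1) :
    2 * noSuccessProb s p + oneSuccessProb s p
      ≤ 2 * (1 - (∑ i ∈ s, p i) / #s) ^ #s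
        + (∑ i ∈ s, p i) * (1 - (∑ i ∈ s, p i) / #s) ^ (#s - 1) := by
  rcases s.eq_empty_or_nonempty with rfl | hs
  · simp [noSuccessProb, oneSuccessProb]
  set m := (∑ i ∈ s, p i) / #s
  have hsum : ∑ i ∈ s, p i = #s * m := by
    rw [mul_div_cancel₀ _ (Nat.cast_ne_zero.2 hs.card_pos.ne')]
  calc 2 * noSuccessProb s p + oneSuccessProb s p
      ≤ 2 * noSuccessProb s (fun _ => m) + oneSuccessProb s (fun _ => m) :=
        two_mul_noSuccessProb_add_oneSuccessProb_le_const hp hsum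
    _ = _ := by rw [noSuccessProb_const, oneSuccessProb_const, hsum]; ring

end SuccessProb

section Independence

variable {Ω ι : Type*} [MeasurableSpace Ω] {μ : Measure Ω} [Fintype ι] {z : ι → Ω → ℝ}

lemma sum_eq_one_iff_eq_single [DecidableEq ι] {v : ι → ℝ} (hv : ∀ i, v i = 0 ∨ v i = 1) :
    ∑ i, v i = 1 ↔ ∃ i, v = Pi.single i 1 := by
  refine ⟨fun h => ?_, by rintro ⟨i, rfl⟩; simp⟩
  obtain ⟨i, -, hi⟩ := exists_ne_zero_of_sum_ne_zero (h ▸ one_ne_zero : ∑ i, v i ≠ 0)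
  have hvi : v i = 1 := (hv i).resolve_left hi
  have hrest : ∑ j ∈ univ.erase i, v j = 0 := by linarith [add_sum_erase univ v (mem_univ i)]
  rw [sum_eq_zero_iff_of_nonneg fun j _ => by rcases hv j with h | h <;> simp [h]] at hrest
  refine ⟨i, funext fun j => ?_⟩
  by_cases hji : j = i
  · subst hji; simp [hvi]
  · simp [hji, hrest j (mem_erase.2 ⟨hji, mem_univ j⟩)]

lemma measureReal_iInter_preimage_singleton (hind : iIndepFun z μ) (x : ι → ℝ) :
    μ.real (⋂ i, z i ⁻¹' {x i}) = ∏ i, μ.real (z i ⁻¹' {x i}) := by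
  simp only [measureReal_def, ← ENNReal.toReal_prod]
  rw [hind.meas_iInter fun i => ⟨{x i}, measurableSet_singleton _, rfl⟩]

lemma measureReal_preimage_zero [IsProbabilityMeasure μ] {f : Ω → ℝ} (hf : Measurable f)
    (hval : ∀ ω, f ω = 0 ∨ f ω = 1) : μ.real (f ⁻¹' {0}) = 1 - μ.real {ω | f ω = 1} := by
  have : f ⁻¹' {0} = {ω | f ω = 1}ᶜ := by
    ext ω; rcases hval ω with h | h <;> simp [h]
  have h₁ : MeasurableSet {ω | f ω = 1} := hf (measurableSet_singleton 1)
  rw [this, measureReal_compl h₁, probReal_univ]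

variable [IsProbabilityMeasure μ]

lemma measureReal_sum_eq_zero (hmeas : ∀ i, Measurable (z i)) (hind : iIndepFun z μ)
    (hval : ∀ i ω, z i ω = 0 ∨ z i ω = 1) :
    μ.real {ω | ∑ i, z i ω = 0} = noSuccessProb univ (fun i => μ.real {ω | z i ω = 1}) := by
  have hset : {ω | ∑ i, z i ω = 0} = ⋂ i, z i ⁻¹' {(0 : ι → ℝ) i} := by
    ext ω
    simp [sum_eq_zero_iff_of_nonneg fun i _ => (by rcases hval i ω with h | h <;> simp [h] :
      0 ≤ z i ω)]
  rw [hset, measureReal_iInter_preimage_singleton hind]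
  exact prod_congr rfl fun i _ => measureReal_preimage_zero (hmeas i) (hval i)

lemma measureReal_sum_eq_one [DecidableEq ι] (hmeas : ∀ i, Measurable (z i))
    (hind : iIndepFun z μ) (hval : ∀ i ω, z i ω = 0 ∨ z i ω = 1) :
    μ.real {ω | ∑ i, z i ω = 1} = oneSuccessProb univ (fun i => μ.real {ω | z i ω = 1}) := by
  have hset : {ω | ∑ i, z i ω = 1} = ⋃ i, ⋂ j, z j ⁻¹' {(Pi.single i 1 : ι → ℝ) j} := by
    ext ω
    simp [sum_eq_one_iff_eq_single (hval · ω), funext_iff]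
  have hdisj :
      Pairwise (Function.onFun Disjoint fun i => ⋂ j, z j ⁻¹' {(Pi.single i 1 : ι → ℝ) j}) := by
    intro i i' hii'
    refine Set.disjoint_left.2 fun ω h h' => ?_
    have := (Set.mem_iInter.1 h i).symm.trans (Set.mem_iInter.1 h' i)
    simp [hii'] at this
  rw [hset, measureReal_iUnion_fintype hdisj
    fun i => MeasurableSet.iInter fun j => hmeas j (measurableSet_singleton _)]
  refine sum_congr rfl fun i _ => ?_
  rw [measureReal_iInter_preimage_singleton hind, ← mul_prod_erase univ _ (mem_univ i)]
  congr 1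
  · simp only [Pi.single_eq_same]; rfl
  · refine prod_congr rfl fun j hj => ?_
    rw [Pi.single_eq_of_ne (ne_of_mem_erase hj)]
    exact measureReal_preimage_zero (hmeas j) (hval j)

end Independence

theorem stmt_2_general {Ω : Type*} [MeasurableSpace Ω] (μ : Measure Ω)
    [IsProbabilityMeasure μ] (n : ℕ)
    (z : Fin n → Ω → ℝ) (s : Fin n → ℝ)
    (hmeas : ∀ i, Measurable (z i))
    (hind : iIndepFun z μ)
    (hval : ∀ i ω, z i ω = 0 ∨ z i ω = 1)
    (hs : ∀ i, (μ {ω | z i ω = 1}).toReal = s i)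
    (hs01 : ∀ i, s i ∈ Set.Icc (0:ℝ) 1) :
    2 * (μ {ω | ∑ i, z i ω = 0}).toReal + (μ {ω | ∑ i, z i ω = 1}).toReal
      ≤ 2 * (1 - (∑ i, s i) / n) ^ n +
        (∑ i, s i) * (1 - (∑ i, s i) / n) ^ (n - 1) := by
  have hp : (fun i => μ.real {ω | z i ω = 1}) = s := funext hs
  have h₀ := measureReal_sum_eq_zero hmeas hind hval
  have h₁ := measureReal_sum_eq_one hmeas hind hval
  rw [hp, measureReal_def] at h₀ h₁
  rw [h₀, h₁]
  simpa using two_mul_noSuccessProb_add_oneSuccessProb_le univ fun i _ => hs01 i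

theorem stmt_2 {Ω : Type*} [MeasurableSpace Ω] (μ : Measure Ω)
    [IsProbabilityMeasure μ] (n : ℕ) (hn : 0 < n)
    (z : Fin n → Ω → ℝ) (s : Fin n → ℝ)
    (hmeas : ∀ i, Measurable (z i))
    (hind : iIndepFun z μ)
    (hval : ∀ i ω, z i ω = 0 ∨ z i ω = 1)
    (hs : ∀ i, (μ {ω | z i ω = 1}).toReal = s i)
    (hs01 : ∀ i, s i ∈ Set.Icc (0:ℝ) 1) :
    2 * (μ {ω | ∑ i, z i ω = 0}).toReal + (μ {ω | ∑ i, z i ω = 1}).toReal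
      ≤ 2 * (1 - (∑ i, s i) / n) ^ n +
        (∑ i, s i) * (1 - (∑ i, s i) / n) ^ (n - 1) :=
  stmt_2_general μ n z s hmeas hind hval hs hs01
end

section
/- For real s_1, ..., s_n in [0,1] with fixed sum s, the symmetric polynomial P(s_1,...,s_n) = 2·∏_{i∈[n]}(1 - s_i) + ∑_{i∈[n]} s_i ∏_{j≠i}(1 - s_j) is maximized when s_1 = s_2 = ... = s_n = s/n; i.e., P(s_1,...,s_n) ≤ 2(1 - s/n)^n + s(1 - s/n)^{n-1}. -/
/-!
With `t i = 1 - s i` the left-hand side is `∑ i, ∏ j ≠ i, t j - (n - 2) ∏ i, t i`, and the claim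
is that this is at most `n u ^ (n - 1) - (n - 2) u ^ n` for the mean `u` of the `t i`. Induct on
the number of variables: adjoining `t a` to `m` variables with mean `u'` turns the quantity into
`t a * (old quantity) + (1 - t a) * ∏ t`, which the induction hypothesis and AM-GM bound by an
expression that, written in the new mean `u`, is the tangent line at `u'` of the function
`(m + 1) z ^ m - (m - 1) z ^ (m + 1)`. That function is convex on `[0, 1]`, so the tangent line
lies below it, and its value at `u` is the bound for `m + 1` variables.
-/

open Finset

theorem ConvexOn.add_mul_sub_le_of_hasDerivAt {S : Set ℝ} {f : ℝ → ℝ} {x y f' : ℝ}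
    (hf : ConvexOn ℝ S f) (hx : x ∈ S) (hy : y ∈ S) (hf' : HasDerivAt f f' x) :
    f x + f' * (y - x) ≤ f y := by
  rcases lt_trichotomy x y with hxy | rfl | hxy
  · have h := hf.le_slope_of_hasDerivAt hx hy hxy hf'
    rw [slope_def_field, le_div_iff₀ (sub_pos.2 hxy)] at h
    linarith
  · simp
  · have h := hf.slope_le_of_hasDerivAt hy hx hxy hf'
    rw [slope_def_field, div_le_iff₀ (sub_pos.2 hxy)] at h
    linarith

theorem Real.prod_le_pow_card_of_sum_eq {ι : Type*} {s : Finset ι} {z : ι → ℝ} {u : ℝ}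
    (hz : ∀ i ∈ s, 0 ≤ z i) (hsum : ∑ i ∈ s, z i = #s * u) : ∏ i ∈ s, z i ≤ u ^ #s := by
  rcases s.eq_empty_or_nonempty with rfl | hs
  · simp
  have hn : (#s : ℝ) ≠ 0 := by positivity
  have hamgm := Real.geom_mean_le_arith_mean_weighted s (fun _ ↦ (#s : ℝ)⁻¹) z
    (fun _ _ ↦ by positivity) (by simp [hn]) hz
  rw [← mul_sum, hsum, inv_mul_cancel_left₀ hn] at hamgm
  calc ∏ i ∈ s, z i = (∏ i ∈ s, z i ^ (#s : ℝ)⁻¹) ^ #s := by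
        rw [← prod_pow]
        exact prod_congr rfl fun i hi ↦
          (Real.rpow_inv_natCast_pow (hz i hi) (card_ne_zero.2 hs)).symm
    _ ≤ u ^ #s := pow_le_pow_left₀ (prod_nonneg fun i hi ↦ Real.rpow_nonneg (hz i hi) _) hamgm _

theorem hasDerivAt_succ_mul_pow_sub (m : ℕ) (z : ℝ) :
    HasDerivAt (fun z : ℝ ↦ (m + 1) * z ^ m - (m - 1) * z ^ (m + 1))
      ((m + 1) * m * z ^ (m - 1) - (m - 1) * (m + 1) * z ^ m) z := by
  refine (((hasDerivAt_pow m z).const_mul ((m : ℝ) + 1)).sub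
    ((hasDerivAt_pow (m + 1) z).const_mul ((m : ℝ) - 1))).congr_deriv ?_
  rw [Nat.add_sub_cancel]
  push_cast
  ring

theorem convexOn_succ_mul_pow_sub (m : ℕ) :
    ConvexOn ℝ (Set.Icc 0 1) (fun z : ℝ ↦ (m + 1) * z ^ m - (m - 1) * z ^ (m + 1)) := by
  refine convexOn_of_hasDerivWithinAt2_nonneg (convex_Icc 0 1) (by fun_prop)
    (fun z _ ↦ (hasDerivAt_succ_mul_pow_sub m z).hasDerivWithinAt)
    (fun z _ ↦ (((hasDerivAt_pow (m - 1) z).const_mul ((m + 1) * m : ℝ)).sub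
      ((hasDerivAt_pow m z).const_mul ((m - 1) * (m + 1) : ℝ))).hasDerivWithinAt) ?_
  intro z hz
  rw [interior_Icc] at hz
  obtain _ | k := m
  · simp
  have hpow : z ^ k ≤ z ^ (k - 1) := pow_le_pow_of_le_one hz.1.le hz.2.le (Nat.sub_le k 1)
  simp only [Nat.add_sub_cancel]
  push_cast
  nlinarith [mul_nonneg (mul_nonneg (k.cast_nonneg : (0:ℝ) ≤ k) (by positivity : (0:ℝ) ≤ k + 1))
    (sub_nonneg.2 hpow)]

theorem Finset.sum_prod_erase_cons {ι R : Type*} [DecidableEq ι] [CommSemiring R] {a : ι}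
    {s : Finset ι} (ha : a ∉ s) (f : ι → R) :
    ∑ i ∈ cons a s ha, ∏ j ∈ (cons a s ha).erase i, f j
      = ∏ j ∈ s, f j + f a * ∑ i ∈ s, ∏ j ∈ s.erase i, f j := by
  rw [sum_cons, erase_cons, mul_sum]
  congr 1
  refine sum_congr rfl fun i hi ↦ ?_
  rw [erase_cons_of_ne ha (ne_of_mem_of_not_mem hi ha).symm, prod_cons]

theorem Finset.sum_mul_prod_erase_one_sub {ι R : Type*} [DecidableEq ι] [CommRing R]
    (s : Finset ι) (f : ι → R) :
    ∑ i ∈ s, f i * ∏ j ∈ s.erase i, (1 - f j)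
      = ∑ i ∈ s, ∏ j ∈ s.erase i, (1 - f j) - #s * ∏ i ∈ s, (1 - f i) := by
  rw [← nsmul_eq_mul, ← sum_const, ← sum_sub_distrib]
  refine sum_congr rfl fun i hi ↦ ?_
  rw [← mul_prod_erase s (fun j ↦ 1 - f j) hi]
  ring

theorem exists_mem_Icc_sum_eq_card_mul {ι : Type*} {s : Finset ι} {f : ι → ℝ}
    (hf : ∀ i ∈ s, f i ∈ Set.Icc (0 : ℝ) 1) :
    ∃ u ∈ Set.Icc (0 : ℝ) 1, ∑ i ∈ s, f i = #s * u := by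
  rcases s.eq_empty_or_nonempty with rfl | hs
  · exact ⟨0, by simp, by simp⟩
  have hcard : (0 : ℝ) < #s := by positivity
  refine ⟨(∑ i ∈ s, f i) / #s, ⟨?_, ?_⟩, by field_simp⟩
  · exact div_nonneg (sum_nonneg fun i hi ↦ (hf i hi).1) hcard.le
  · rw [div_le_one hcard]
    simpa using sum_le_sum fun i hi ↦ (hf i hi).2

theorem sum_prod_erase_sub_mul_prod_le {ι : Type*} [DecidableEq ι] (s : Finset ι) {t : ι → ℝ}
    (ht : ∀ i ∈ s, t i ∈ Set.Icc (0 : ℝ) 1) {u : ℝ} (hsum : ∑ i ∈ s, t i = #s * u) :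
    ∑ i ∈ s, ∏ j ∈ s.erase i, t j - (#s - 2) * ∏ i ∈ s, t i
      ≤ #s * u ^ (#s - 1) - (#s - 2) * u ^ #s := by
  induction s using Finset.cons_induction generalizing u with
  | empty => simp
  | cons a s ha ih =>
    have hts : ∀ i ∈ s, t i ∈ Set.Icc (0 : ℝ) 1 := fun i hi ↦ ht i (mem_cons_of_mem hi)
    obtain ⟨hta0, hta1⟩ := ht a (mem_cons_self a s)
    obtain ⟨u', ⟨hu'0, hu'1⟩, hsum'⟩ := exists_mem_Icc_sum_eq_card_mul hts
    set m := #s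
    have hta : t a = (m + 1) * u - m * u' := by
      rw [sum_cons, hsum', card_cons] at hsum
      push_cast at hsum
      linarith
    have hu : u ∈ Set.Icc (0 : ℝ) 1 := by
      constructor <;>
        nlinarith [mul_nonneg m.cast_nonneg hu'0, mul_nonneg m.cast_nonneg (sub_nonneg.2 hu'1)]
    have hamgm := Real.prod_le_pow_card_of_sum_eq (fun i hi ↦ (hts i hi).1) hsum'
    have htangent : t a * (m * u' ^ (m - 1) - (m - 2) * u' ^ m) + (1 - t a) * u' ^ m
        = (m + 1) * u' ^ m - (m - 1) * u' ^ (m + 1)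
          + ((m + 1) * m * u' ^ (m - 1) - (m - 1) * (m + 1) * u' ^ m) * (u - u') := by
      rw [hta]
      obtain _ | k := m
      · push_cast
        ring
      · simp only [Nat.add_sub_cancel]
        push_cast
        ring
    rw [sum_prod_erase_cons, card_cons, prod_cons, Nat.add_sub_cancel]
    push_cast
    calc ∏ j ∈ s, t j + t a * ∑ i ∈ s, ∏ j ∈ s.erase i, t j - (m + 1 - 2) * (t a * ∏ i ∈ s, t i)
        = t a * (∑ i ∈ s, ∏ j ∈ s.erase i, t j - (m - 2) * ∏ i ∈ s, t i)
          + (1 - t a) * ∏ i ∈ s, t i := by ring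
      _ ≤ t a * (m * u' ^ (m - 1) - (m - 2) * u' ^ m) + (1 - t a) * u' ^ m :=
        add_le_add (mul_le_mul_of_nonneg_left (ih hts hsum') hta0)
          (mul_le_mul_of_nonneg_left hamgm (sub_nonneg.2 hta1))
      _ ≤ (m + 1) * u ^ m - (m - 1) * u ^ (m + 1) := by
        rw [htangent]
        exact (convexOn_succ_mul_pow_sub m).add_mul_sub_le_of_hasDerivAt ⟨hu'0, hu'1⟩ hu
          (hasDerivAt_succ_mul_pow_sub m u')
      _ = (m + 1) * u ^ m - (m + 1 - 2) * u ^ (m + 1) := by ring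

theorem stmt_3 (n : ℕ) (hn : 0 < n) (s : Fin n → ℝ)
    (hs : ∀ i, s i ∈ Set.Icc (0:ℝ) 1) (S : ℝ) (hS : S = ∑ i, s i) :
    2 * (∏ i, (1 - s i)) +
        ∑ i, s i * ∏ j ∈ Finset.univ.erase i, (1 - s j)
      ≤ 2 * (1 - S / n) ^ n + S * (1 - S / n) ^ (n - 1) := by
  obtain ⟨k, rfl⟩ := Nat.exists_eq_add_one.2 hn
  rw [Nat.add_sub_cancel, sum_mul_prod_erase_one_sub]
  push_cast
  set u := 1 - S / (k + 1)
  have hS' : S = (k + 1) * (1 - u) := by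
    simp only [u]
    field_simp
    ring
  have hsum : ∑ i, (1 - s i) = #(univ : Finset (Fin (k + 1))) * u := by
    rw [sum_sub_distrib, ← hS]
    simp only [sum_const, card_univ, Fintype.card_fin, nsmul_eq_mul, mul_one]
    push_cast
    linarith
  have key := sum_prod_erase_sub_mul_prod_le univ
    (fun i _ ↦ ⟨sub_nonneg.2 (hs i).2, sub_le_self 1 (hs i).1⟩) hsum
  simp only [card_univ, Fintype.card_fin, Nat.add_sub_cancel] at key ⊢
  push_cast at key ⊢
  have hbound : (k + 1) * u ^ k - (k + 1 - 2) * u ^ (k + 1) = 2 * u ^ (k + 1) + S * u ^ k := by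
    rw [hS', pow_succ]
    ring
  linarith
end

section
/- For every positive integer n and every x ≥ 0, the function y ↦ (1/y)(x + 1 - (1 - y/n)^n) is decreasing in y on (0,1]. -/
/-! Dividing `1 - (1 - y/n)^n` by `y` leaves the average `(1/n) ∑_{k<n} (1 - y/n)^k` of powers
of a base in `[0, 1]` that decreases with `y`, and `x / y` decreases too. -/

open Finset Set

lemma one_sub_one_sub_pow_eq_mul_geom_sum {R : Type*} [CommRing R] (t : R) (n : ℕ) :
    1 - (1 - t) ^ n = t * ∑ i ∈ range n, (1 - t) ^ i := by
  rw [← mul_neg_geom_sum, sub_sub_cancel]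

lemma one_sub_one_sub_div_pow_div_eq (n : ℕ) {y : ℝ} (hy : y ≠ 0) :
    (1 - (1 - y / n) ^ n) / y = (∑ i ∈ range n, (1 - y / n) ^ i) / n := by
  rw [one_sub_one_sub_pow_eq_mul_geom_sum]
  field_simp

lemma antitoneOn_one_sub_one_sub_div_pow_div (n : ℕ) :
    AntitoneOn (fun y : ℝ => (1 - (1 - y / n) ^ n) / y) (Ioc 0 n) := by
  intro a ha b hb hab
  have base_nonneg : 0 ≤ 1 - b / n := sub_nonneg.2 (div_le_one_of_le₀ hb.2 n.cast_nonneg)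
  have base_le : 1 - b / n ≤ 1 - a / n := by gcongr
  simp only [one_sub_one_sub_div_pow_div_eq n ha.1.ne', one_sub_one_sub_div_pow_div_eq n hb.1.ne']
  gcongr

theorem stmt_5 (n : ℕ) (hn : 0 < n) (x : ℝ) (hx : 0 ≤ x) :
    AntitoneOn (fun y : ℝ => (x + 1 - (1 - y / n) ^ n) / y) (Set.Ioc 0 1) := by
  have hx_div : AntitoneOn (fun y : ℝ => x / y) (Ioc 0 1) :=
    fun a ha _ _ hab => div_le_div_of_nonneg_left hx ha.1 hab
  have hq : AntitoneOn (fun y : ℝ => (1 - (1 - y / n) ^ n) / y) (Ioc 0 1) :=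
    (antitoneOn_one_sub_one_sub_div_pow_div n).mono
      (Ioc_subset_Ioc_right (by exact_mod_cast hn))
  simpa only [add_sub_assoc, add_div] using hx_div.add hq
end

section
/- For every positive integer n ≥ 2, the function y ↦ (1/y)(2 - r_n(y)) is decreasing in y on (0,1), where r_n(y) = 2(1 - y/n)^n + y(1 - y/n)^{n-1}. -/
/-!
Put `t = 1 - y / n` and `p = y / n`. The derivative of `(2 - r_n(y)) / y` has the sign of
`r_n(y) - y r_n'(y) - 2`, and `r_n(y) - y r_n'(y) = 2 (t^n + n p t^(n-1) + C(n,2) p^2 t^(n-2))`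
is twice the probability that a binomial `(n, p)` variable is at most `2`, hence at most `2`.
-/

open Finset Set

lemma sum_range_pow_mul_one_sub_pow_mul_choose_le_one {p : ℝ} (hp₀ : 0 ≤ p) (hp₁ : p ≤ 1)
    {m n : ℕ} (hm : m ≤ n + 1) :
    ∑ k ∈ range m, p ^ k * (1 - p) ^ (n - k) * n.choose k ≤ 1 := by
  have hq : 0 ≤ 1 - p := sub_nonneg.mpr hp₁
  calc ∑ k ∈ range m, p ^ k * (1 - p) ^ (n - k) * n.choose k
      ≤ ∑ k ∈ range (n + 1), p ^ k * (1 - p) ^ (n - k) * n.choose k :=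
        sum_le_sum_of_subset_of_nonneg (range_subset_range.mpr hm) fun _ _ _ ↦ by positivity
    _ = 1 := by rw [← add_pow, add_sub_cancel, one_pow]

lemma binomial_lower_tail_two_le_one {p : ℝ} (hp₀ : 0 ≤ p) (hp₁ : p ≤ 1) (m : ℕ) :
    (1 - p) ^ (m + 2) + (m + 2) * p * (1 - p) ^ (m + 1)
      + (m + 2) * (m + 1) / 2 * p ^ 2 * (1 - p) ^ m ≤ 1 := by
  have h :=
    sum_range_pow_mul_one_sub_pow_mul_choose_le_one hp₀ hp₁ (m := 3) (n := m + 2) (by omega)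
  simp only [sum_range_succ, sum_range_zero, Nat.choose_zero_right, Nat.choose_one_right,
    Nat.cast_choose_two] at h
  push_cast at h
  convert h using 1
  ring

lemma antitoneOn_div_self_of_hasDerivAt {g g' : ℝ → ℝ} {a b : ℝ} (ha : 0 ≤ a)
    (hg : ∀ y ∈ Ioo a b, HasDerivAt g (g' y) y) (hle : ∀ y ∈ Ioo a b, y * g' y ≤ g y) :
    AntitoneOn (fun y ↦ g y / y) (Ioo a b) := by
  have hderiv :
      ∀ y ∈ Ioo a b, HasDerivAt (fun y ↦ g y / y) ((g' y * y - g y * 1) / y ^ 2) y :=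
    fun y hy ↦ (hg y hy).div (hasDerivAt_id y) (by linarith [hy.1])
  refine antitoneOn_of_hasDerivWithinAt_nonpos (f' := fun y ↦ (g' y * y - g y * 1) / y ^ 2)
    (convex_Ioo a b) (fun y hy ↦ (hderiv y hy).continuousAt.continuousWithinAt)
    (fun y hy ↦ ?_) fun y hy ↦ ?_
  all_goals rw [interior_Ioo] at hy
  · exact (hderiv y hy).hasDerivWithinAt
  · exact div_nonpos_of_nonpos_of_nonneg (by linarith [hle y hy]) (sq_nonneg y)

lemma hasDerivAt_two_sub_r (m : ℕ) (y : ℝ) :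
    HasDerivAt
      (fun y : ℝ ↦ 2 - (2 * (1 - y / (m + 2)) ^ (m + 2) + y * (1 - y / (m + 2)) ^ (m + 1)))
      ((1 - y / (m + 2)) ^ (m + 1) + (m + 1) / (m + 2) * y * (1 - y / (m + 2)) ^ m) y := by
  have ht : HasDerivAt (fun y : ℝ ↦ 1 - y / (m + 2)) (-1 / (m + 2)) y := by
    simpa [neg_div] using ((hasDerivAt_id y).div_const ((m : ℝ) + 2)).const_sub 1
  refine ((((ht.pow (m + 2)).const_mul 2).add ((hasDerivAt_id y).mul (ht.pow (m + 1)))).const_sub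
    2).congr_deriv ?_
  simp only [Pi.pow_apply, id, Nat.add_sub_cancel, Nat.reduceSubDiff, Nat.cast_add, Nat.cast_ofNat,
    Nat.cast_one]
  generalize 1 - y / (m + 2) = t
  field_simp
  ring

lemma mul_deriv_two_sub_r_le (m : ℕ) {y : ℝ} (hy₀ : 0 ≤ y) (hy₁ : y ≤ m + 2) :
    y * ((1 - y / (m + 2)) ^ (m + 1) + (m + 1) / (m + 2) * y * (1 - y / (m + 2)) ^ m)
      ≤ 2 - (2 * (1 - y / (m + 2)) ^ (m + 2) + y * (1 - y / (m + 2)) ^ (m + 1)) := by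
  have hm : (0 : ℝ) < m + 2 := by positivity
  have h := binomial_lower_tail_two_le_one (div_nonneg hy₀ hm.le) ((div_le_one hm).mpr hy₁) m
  have hy : y = (m + 2) * (y / (m + 2)) := by field_simp
  generalize y / (m + 2) = p at h hy ⊢
  subst hy
  rw [show (m + 1) / (m + 2) * ((m + 2) * p) = (m + 1) * p by field_simp]
  linear_combination 2 * h

theorem stmt_7 (n : ℕ) (hn : 2 ≤ n) :
    AntitoneOn
      (fun y : ℝ => (2 - (2 * (1 - y / n) ^ n + y * (1 - y / n) ^ (n - 1))) / y)
      (Set.Ioo 0 1) := by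
  obtain ⟨m, rfl⟩ := Nat.exists_eq_add_of_le' hn
  push_cast
  refine antitoneOn_div_self_of_hasDerivAt le_rfl (fun y _ ↦ hasDerivAt_two_sub_r m y)
    fun y hy ↦ mul_deriv_two_sub_r_le m hy.1.le
      (by linarith [hy.2, (m.cast_nonneg : (0 : ℝ) ≤ m)])
end

section
/- For every positive integer H, the function f_H(x) = (H - e^{-x} ∑_{i=0}^{H-1} (H - i) x^i / i!)/x is decreasing in x on (0, ∞). -/
/-!
Put `g(x) = H - e^{-x} ∑_{i<H} (H - i) x^i / i!`, the mean of `min(N, H)` for a Poisson variable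
`N` of mean `x`. With `T_k(x) = ∑_{i<k} x^i / i!` we have `∑_{i<H} (H - i) x^i / i! = ∑_{k=1}^H T_k(x)`
and `(e^{-x} T_{k+1}(x))' = -e^{-x} x^k / k!`, so `g' = e^{-x} T_H` and
`g'' = -e^{-x} x^{H-1} / (H-1)! ≤ 0` on `[0, ∞)`. Thus `g` is concave on `[0, ∞)` with `g(0) = 0`,
and the slope `g(x) / x` of its chord from the origin decreases.
-/

open Finset Real Nat

theorem ConcaveOn.antitoneOn_div_of_map_zero {𝕜 : Type*} [Field 𝕜] [LinearOrder 𝕜]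
    [IsStrictOrderedRing 𝕜] {f : 𝕜 → 𝕜} (hf : ConcaveOn 𝕜 (Set.Ici 0) f) (h₀ : f 0 = 0) :
    AntitoneOn (fun x => f x / x) (Set.Ioi 0) := by
  have hslope := hf.antitoneOn_slope_gt Set.self_mem_Ici
  simp only [slope_fun_def_field, h₀, sub_zero] at hslope
  exact hslope.mono fun x hx => ⟨le_of_lt hx, hx⟩

noncomputable def expPartialSum (n : ℕ) (x : ℝ) : ℝ := ∑ i ∈ range n, x ^ i / i !

theorem expPartialSum_succ (n : ℕ) (x : ℝ) :
    expPartialSum (n + 1) x = expPartialSum n x + x ^ n / n ! :=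
  sum_range_succ _ _

theorem hasDerivAt_expPartialSum_succ (n : ℕ) (x : ℝ) :
    HasDerivAt (expPartialSum (n + 1)) (expPartialSum n x) x := by
  induction n with
  | zero =>
    have hone : expPartialSum 1 = fun _ => 1 := by ext; simp [expPartialSum]
    simpa [hone, expPartialSum] using hasDerivAt_const x (1 : ℝ)
  | succ n ih =>
    have hpow : HasDerivAt (fun x : ℝ => x ^ (n + 1) / (n + 1)!) (x ^ n / n !) x := by
      refine ((hasDerivAt_pow (n + 1) x).div_const ((n + 1)! : ℝ)).congr_deriv ?_
      rw [Nat.factorial_succ]; push_cast; field_simp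
    rw [funext (expPartialSum_succ (n + 1)), expPartialSum_succ]
    exact ih.add hpow

theorem hasDerivAt_exp_neg_mul_expPartialSum_succ (n : ℕ) (x : ℝ) :
    HasDerivAt (fun x => exp (-x) * expPartialSum (n + 1) x) (-(exp (-x) * (x ^ n / n !))) x := by
  refine ((hasDerivAt_neg x).exp.mul (hasDerivAt_expPartialSum_succ n x)).congr_deriv ?_
  rw [expPartialSum_succ]; ring

theorem sum_range_sub_mul_pow_div_factorial (H : ℕ) (x : ℝ) :
    ∑ i ∈ range H, ((H : ℝ) - i) * x ^ i / i ! = ∑ k ∈ range H, expPartialSum (k + 1) x := by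
  induction H with
  | zero => simp
  | succ H ih =>
    have hlast : ∑ i ∈ range H, ((H : ℝ) - i) * x ^ i / i ! =
        ∑ i ∈ range (H + 1), ((H : ℝ) - i) * x ^ i / i ! := by
      simp [sum_range_succ]
    rw [sum_range_succ (fun k => expPartialSum (k + 1) x), ← ih, hlast, expPartialSum,
      ← sum_add_distrib]
    exact sum_congr rfl fun i _ => by push_cast; ring

noncomputable def poissonMinMean (H : ℕ) (x : ℝ) : ℝ :=
  H - exp (-x) * ∑ i ∈ range H, ((H : ℝ) - i) * x ^ i / i !

theorem poissonMinMean_zero (H : ℕ) : poissonMinMean H 0 = 0 := by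
  cases H <;> simp [poissonMinMean, sum_range_succ']

theorem hasDerivAt_poissonMinMean (H : ℕ) (x : ℝ) :
    HasDerivAt (poissonMinMean H) (exp (-x) * expPartialSum H x) x := by
  unfold poissonMinMean
  simp only [sum_range_sub_mul_pow_div_factorial, mul_sum]
  refine ((HasDerivAt.fun_sum fun k _ =>
    hasDerivAt_exp_neg_mul_expPartialSum_succ k x).const_sub (H : ℝ)).congr_deriv ?_
  simp [expPartialSum, mul_sum]

theorem concaveOn_poissonMinMean {H : ℕ} (hH : 0 < H) :
    ConcaveOn ℝ (Set.Ici 0) (poissonMinMean H) := by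
  obtain ⟨n, rfl⟩ := Nat.exists_eq_add_one_of_ne_zero hH.ne'
  refine concaveOn_of_hasDerivWithinAt2_nonpos (convex_Ici 0)
    (fun x _ => (hasDerivAt_poissonMinMean _ x).continuousAt.continuousWithinAt)
    (fun x _ => (hasDerivAt_poissonMinMean _ x).hasDerivWithinAt)
    (fun x _ => (hasDerivAt_exp_neg_mul_expPartialSum_succ n x).hasDerivWithinAt) ?_
  intro x hx
  rw [interior_Ici, Set.mem_Ioi] at hx
  exact neg_nonpos.2 (by positivity)

theorem stmt_8 (H : ℕ) (hH : 0 < H) :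
    AntitoneOn
      (fun x : ℝ =>
        ((H : ℝ) - Real.exp (-x) *
          ∑ i ∈ Finset.range H, ((H : ℝ) - i) * x ^ i / (Nat.factorial i)) / x)
      (Set.Ioi 0) :=
  (concaveOn_poissonMinMean hH).antitoneOn_div_of_map_zero (poissonMinMean_zero H)
end

section
/- For every positive integer H and every x > 0, e^{-x} ∑_{i=0}^{H-1} (x^i/i!)(H - i)(x + 1 - i) ≤ H. -/
open Finset Nat

/-- The potential `g i = i (H + 1 - i) xⁱ / i!` telescopes the sum: its `i`-th term is
`H xⁱ / i! + (g (i + 1) - g i)`, because `x · xⁱ / i! = (i + 1) xⁱ⁺¹ / (i + 1)!`. -/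
theorem sum_range_pow_div_factorial_mul_sub_mul_add_one_sub {K : Type*} [Field K] [CharZero K]
    (H : ℕ) (x : K) :
    ∑ i ∈ range H, x ^ i / i ! * (H - i) * (x + 1 - i) = H * ∑ i ∈ range (H + 1), x ^ i / i ! := by
  set g : ℕ → K := fun i => i * (H + 1 - i) * (x ^ i / i !)
  have term_eq (i : ℕ) :
      x ^ i / i ! * (H - i) * (x + 1 - i) = H * (x ^ i / i !) + (g (i + 1) - g i) := by
    simp only [g, factorial_succ, pow_succ, cast_mul, cast_add, cast_one]
    field_simp
    ring
  rw [sum_congr rfl fun i _ => term_eq i, sum_add_distrib, sum_range_sub, ← mul_sum,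
    sum_range_succ _ H]
  simp only [g, cast_zero, zero_mul]
  ring

theorem stmt_9_general (H : ℕ) (x : ℝ) (hx : 0 < x) :
    Real.exp (-x) *
      ∑ i ∈ Finset.range H, (x ^ i / (Nat.factorial i)) * ((H : ℝ) - i) * (x + 1 - i)
      ≤ (H : ℝ) := by
  rw [sum_range_pow_div_factorial_mul_sub_mul_add_one_sub]
  calc Real.exp (-x) * (H * ∑ i ∈ range (H + 1), x ^ i / i !)
      ≤ Real.exp (-x) * (H * Real.exp x) := by
        gcongr
        exact Real.sum_le_exp_of_nonneg hx.le _
    _ = H := by rw [mul_left_comm, ← Real.exp_add, neg_add_cancel, Real.exp_zero, mul_one]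

theorem stmt_9 (H : ℕ) (hH : 0 < H) (x : ℝ) (hx : 0 < x) :
    Real.exp (-x) *
      ∑ i ∈ Finset.range H, (x ^ i / (Nat.factorial i)) * ((H : ℝ) - i) * (x + 1 - i)
      ≤ (H : ℝ) :=
  stmt_9_general H x hx
end

section
/- Let s_1, ..., s_n ∈ [0,1] with fixed sum s, let z_i be independent Bernoulli(s_i) variables with sum y, and let H be a positive integer. Then ∑_{i=0}^{H-1} (H-i)·P[y = i] ≤ ∑_{i=0}^{H-1} (H-i)·C(n,i)·(s/n)^i·(1 - s/n)^{n-i}; i.e., the polynomial ∑_{i=0}^{H-1}(H-i)·e_i-type expression is maximized when all s_i are equal. -/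
/-!
The left-hand side is `E[g y]` for the convex function `g k = (H - k)⁺`. As a function of the
success probabilities, `E[g y]` is affine in each coordinate, so replacing `(s i, s j)` by a pair
with the same sum and a larger product changes it by the increase of the product times
`E[g (y' + 2) + g y' - 2 g (y' + 1)] ≥ 0`, where `y'` is the sum of the other variables.
Such moves with `s i < s/n < s j` put one more coordinate at the mean `s/n` while keeping the
sum, and end at the binomial law, which is the right-hand side.
-/

open Finset

lemma exists_lt_and_exists_gt_of_sum_eq {ι : Type*} [Fintype ι] {p : ι → ℝ} {c : ℝ}
    (hsum : ∑ i, p i = ∑ _i : ι, c) {i₀ : ι}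
    (hi₀ : p i₀ ≠ c) : (∃ i, p i < c) ∧ ∃ j, c < p j := by
  constructor
  · by_contra! h
    have := sum_lt_sum (fun k _ => h k) ⟨i₀, mem_univ _, lt_of_le_of_ne (h i₀) hi₀.symm⟩
    linarith
  · by_contra! h
    have := sum_lt_sum (fun k _ => h k) ⟨i₀, mem_univ _, lt_of_le_of_ne (h i₀) hi₀⟩
    linarith

namespace PoissonBinomial

variable {ι : Type*} [DecidableEq ι]

section Combinatorics

/- For independent `z i ~ Bernoulli (p i)`, `expect g p s = E[g (∑ i ∈ s, z i)]` and
`prob p s k = P[∑ i ∈ s, z i = k]`. -/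
noncomputable def expect (g : ℕ → ℝ) (p : ι → ℝ) (s : Finset ι) : ℝ :=
  ∑ T ∈ s.powerset, (∏ j ∈ T, p j) * (∏ j ∈ s \ T, (1 - p j)) * g #T

noncomputable def prob (p : ι → ℝ) (s : Finset ι) (k : ℕ) : ℝ :=
  ∑ T ∈ s.powersetCard k, (∏ j ∈ T, p j) * ∏ j ∈ s \ T, (1 - p j)

variable {g : ℕ → ℝ} {p q : ι → ℝ} {s : Finset ι}

lemma expect_congr (h : ∀ k ∈ s, p k = q k) : expect g p s = expect g q s := by
  refine sum_congr rfl fun T hT => ?_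
  have hTs := mem_powerset.1 hT
  rw [prod_congr rfl fun j hj => h j (hTs hj),
    prod_congr rfl fun j hj => congrArg (1 - ·) (h j (mem_sdiff.1 hj).1)]

lemma expect_insert {i : ι} (hi : i ∉ s) :
    expect g p (insert i s) = (1 - p i) * expect g p s + p i * expect (g ∘ (· + 1)) p s := by
  rw [expect, sum_powerset_insert hi, expect, expect, mul_sum, mul_sum]
  congr 1
  · refine sum_congr rfl fun T hT => ?_
    have hiT : i ∉ T := fun h => hi (mem_powerset.1 hT h)
    rw [insert_sdiff_of_notMem _ hiT, prod_insert fun h => hi (mem_sdiff.1 h).1]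
    ring
  · refine sum_congr rfl fun T hT => ?_
    have hiT : i ∉ T := fun h => hi (mem_powerset.1 hT h)
    rw [prod_insert hiT, insert_sdiff_insert, sdiff_insert_of_notMem hi, card_insert_of_notMem hiT]
    simp only [Function.comp_apply]
    ring

lemma expect_nonneg (hp : ∀ k ∈ s, p k ∈ Set.Icc (0 : ℝ) 1) (hg : ∀ m, 0 ≤ g m) :
    0 ≤ expect g p s := by
  refine sum_nonneg fun T hT => mul_nonneg (mul_nonneg ?_ ?_) (hg _)
  · exact prod_nonneg fun j hj => (hp j (mem_powerset.1 hT hj)).1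
  · exact prod_nonneg fun j hj => sub_nonneg.2 (hp j (mem_sdiff.1 hj).1).2

lemma expect_add_sub_two_mul (g₀ g₁ g₂ : ℕ → ℝ) :
    expect g₀ p s + expect g₂ p s - 2 * expect g₁ p s
      = expect (fun k => g₀ k + g₂ k - 2 * g₁ k) p s := by
  simp only [expect, ← sum_add_distrib, mul_sum, ← sum_sub_distrib]
  exact sum_congr rfl fun T _ => by ring

lemma expect_le_of_sum_eq_of_mul_le (hg : ∀ k, 2 * g (k + 1) ≤ g k + g (k + 2)) {i j : ι}
    (hi : i ∈ s) (hj : j ∈ s) (hij : i ≠ j) (hp : ∀ k ∈ s, p k ∈ Set.Icc (0 : ℝ) 1)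
    (hpq : ∀ k ∈ s, k ≠ i → k ≠ j → p k = q k)
    (hsum : q i + q j = p i + p j) (hprod : p i * p j ≤ q i * q j) :
    expect g p s ≤ expect g q s := by
  set t := (s.erase i).erase j
  have hjt : j ∉ t := notMem_erase j _
  have hit : i ∉ insert j t := by simp [t, hij]
  have hs : s = insert i (insert j t) := by
    rw [insert_erase (mem_erase.2 ⟨hij.symm, hj⟩), insert_erase hi]
  have hpqt : ∀ k ∈ t, p k = q k := fun k hk => by
    simp only [t, mem_erase] at hk
    exact hpq k hk.2.2 hk.2.1 hk.1
  set A := expect g q t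
  set B := expect (g ∘ (· + 1)) q t
  set C := expect ((g ∘ (· + 1)) ∘ (· + 1)) q t
  have expand : ∀ r : ι → ℝ, expect g r s =
      (1 - r i) * ((1 - r j) * expect g r t + r j * expect (g ∘ (· + 1)) r t)
        + r i * ((1 - r j) * expect (g ∘ (· + 1)) r t
          + r j * expect ((g ∘ (· + 1)) ∘ (· + 1)) r t) := fun r => by
    rw [hs, expect_insert hit, expect_insert hjt, expect_insert hjt]
  have hconvex : 0 ≤ A + C - 2 * B := by
    rw [expect_add_sub_two_mul]
    refine expect_nonneg (fun k hk => hpqt k hk ▸ hp k ?_) fun m => ?_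
    · simp only [t, mem_erase] at hk; exact hk.2.2
    · simpa [sub_nonneg] using hg m
  rw [expand p, expand q, expect_congr hpqt, expect_congr hpqt, expect_congr hpqt]
  have gain : (1 - q i) * ((1 - q j) * A + q j * B) + q i * ((1 - q j) * B + q j * C)
      - ((1 - p i) * ((1 - p j) * A + p j * B) + p i * ((1 - p j) * B + p j * C))
      = (q i * q j - p i * p j) * (A + C - 2 * B) := by
    linear_combination (B - A) * hsum
  linarith [mul_nonneg (sub_nonneg.2 hprod) hconvex]

section Equalize

variable [Fintype ι] {c : ℝ}

/-- Moving `p i < c < p j` to `c, p i + p j - c` fixes one more coordinate at `c`. -/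
lemma exists_expect_le_of_ne (hg : ∀ k, 2 * g (k + 1) ≤ g k + g (k + 2))
    (hp : ∀ i, p i ∈ Set.Icc (0 : ℝ) 1) (hsum : ∑ i, p i = ∑ _i : ι, c) {i₀ : ι}
    (hi₀ : p i₀ ≠ c) :
    ∃ q : ι → ℝ, (∀ i, q i ∈ Set.Icc (0 : ℝ) 1) ∧ ∑ i, q i = ∑ _i : ι, c ∧
      #{i | q i ≠ c} < #{i | p i ≠ c} ∧ expect g p univ ≤ expect g q univ := by
  obtain ⟨⟨i, hi⟩, j, hj⟩ := exists_lt_and_exists_gt_of_sum_eq hsum hi₀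
  have hij : i ≠ j := by rintro rfl; linarith
  set q := Function.update (Function.update p i c) j (p i + p j - c)
  have hqi : q i = c := by simp [q, hij]
  have hqj : q j = p i + p j - c := by simp [q]
  have hqk : ∀ k, k ≠ i → k ≠ j → q k = p k := fun k hki hkj => by simp [q, hki, hkj]
  refine ⟨q, fun k => ?_, ?_, ?_, ?_⟩
  · by_cases hki : k = i
    · subst hki; rw [hqi]; constructor <;> linarith [(hp k).1, (hp j).2]
    by_cases hkj : k = j
    · subst hkj; rw [hqj]; constructor <;> linarith [(hp i).1, (hp k).2]
    rw [hqk k hki hkj]; exact hp k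
  · have hdiff : ∑ k, (q k - p k) = 0 := by
      rw [← sum_subset (subset_univ {i, j}) fun k _ hk => ?_, sum_pair hij, hqi, hqj]
      · ring
      · simp only [mem_insert, mem_singleton, not_or] at hk
        rw [hqk k hk.1 hk.2, sub_self]
    rw [sum_sub_distrib] at hdiff
    linarith
  · refine card_lt_card <| (ssubset_iff_of_subset fun k => ?_).2 ⟨i, ?_, ?_⟩
    · simp only [mem_filter, mem_univ, true_and]
      by_cases hki : k = i
      · subst hki; exact fun h => (h hqi).elim
      by_cases hkj : k = j
      · subst hkj; exact fun _ => hj.ne'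
      rw [hqk k hki hkj]; exact id
    · simpa using hi.ne
    · simpa using hqi
  · refine expect_le_of_sum_eq_of_mul_le hg (mem_univ i) (mem_univ j) hij (fun k _ => hp k)
      (fun k _ hki hkj => (hqk k hki hkj).symm) (by rw [hqi, hqj]; ring) ?_
    rw [hqi, hqj]
    nlinarith [mul_nonneg (sub_nonneg.2 hi.le) (sub_nonneg.2 hj.le)]

theorem expect_le_expect_const (hg : ∀ k, 2 * g (k + 1) ≤ g k + g (k + 2))
    (hp : ∀ i, p i ∈ Set.Icc (0 : ℝ) 1) (hsum : ∑ i, p i = ∑ _i : ι, c) :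
    expect g p univ ≤ expect g (fun _ : ι => c) univ := by
  induction hm : #{i | p i ≠ c} using Nat.strong_induction_on generalizing p with
  | _ m ih =>
  by_cases hconst : ∃ i₀, p i₀ ≠ c
  · obtain ⟨i₀, hi₀⟩ := hconst
    obtain ⟨q, hq, hqsum, hcard, hle⟩ := exists_expect_le_of_ne hg hp hsum hi₀
    exact hle.trans (ih _ (hm ▸ hcard) hq hqsum rfl)
  · exact (expect_congr fun k _ => not_exists_not.1 hconst k).le

end Equalize

lemma expect_eq_sum_prob {N : ℕ} (hg : ∀ k, N ≤ k → g k = 0) :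
    expect g p s = ∑ k ∈ range N, g k * prob p s k := by
  rw [expect, ← sum_filter_of_ne (p := fun T => #T < N)
      fun T _ h => not_le.1 fun hN => h (by rw [hg _ hN, mul_zero]),
    ← sum_fiberwise_of_maps_to (g := card) (t := range N)
      fun T hT => mem_range.2 (mem_filter.1 hT).2]
  refine sum_congr rfl fun k hk => ?_
  have hfiber : {T ∈ {T ∈ s.powerset | #T < N} | #T = k} = s.powersetCard k := by
    ext T
    simp only [mem_filter, mem_powerset, mem_powersetCard, mem_range] at hk ⊢
    grind
  rw [hfiber, prob, mul_sum]
  exact sum_congr rfl fun T hT => by rw [(mem_powersetCard.1 hT).2]; ring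

lemma prob_const (q : ℝ) (k : ℕ) :
    prob (fun _ => q) s k = (#s).choose k * q ^ k * (1 - q) ^ (#s - k) := by
  rw [prob, sum_congr rfl fun T hT => by
    rw [prod_const, prod_const, card_sdiff_of_subset (mem_powersetCard.1 hT).1,
      (mem_powersetCard.1 hT).2], sum_const, card_powersetCard, nsmul_eq_mul]
  ring

end Combinatorics

section Probability

open MeasureTheory ProbabilityTheory

lemma preimage_filter_eq_one_eq_iInter {Ω : Type*} [Fintype ι] (z : ι → Ω → ℕ) (T : Finset ι) :
    (fun ω => ({j | z j ω = 1} : Finset ι)) ⁻¹' {T}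
      = ⋂ j, z j ⁻¹' (if j ∈ T then {1} else {1}ᶜ) := by
  ext ω
  simp only [Set.mem_preimage, Set.mem_singleton_iff, Finset.ext_iff, mem_filter, mem_univ,
    true_and, Set.mem_iInter]
  refine forall_congr' fun j => ?_
  split_ifs with hj <;> simp [hj]

variable {Ω : Type*} [MeasurableSpace Ω] {μ : Measure Ω} [IsProbabilityMeasure μ]
  [Fintype ι] {z : ι → Ω → ℕ} {s : ι → ℝ}

lemma measureReal_filter_eq_one_eq (hmeas : ∀ i, Measurable (z i)) (hind : iIndepFun z μ)
    (hs : ∀ i, μ.real {ω | z i ω = 1} = s i) (T : Finset ι) :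
    μ.real ((fun ω => ({j | z j ω = 1} : Finset ι)) ⁻¹' {T})
      = (∏ j ∈ T, s j) * ∏ j ∈ univ \ T, (1 - s j) := by
  have hfactor : ∀ j, μ.real (z j ⁻¹' (if j ∈ T then {1} else {1}ᶜ))
      = if j ∈ T then s j else 1 - s j := fun j => by
    split_ifs
    · exact hs j
    · rw [Set.preimage_compl, probReal_compl_eq_one_sub (hmeas j (measurableSet_singleton 1))]
      exact congrArg (1 - ·) (hs j)
  rw [preimage_filter_eq_one_eq_iInter, measureReal_def,
    hind.meas_iInter fun j =>
      ⟨_, by split_ifs; exacts [measurableSet_singleton 1, (measurableSet_singleton 1).compl], rfl⟩,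
    ENNReal.toReal_prod]
  simp only [← measureReal_def, hfactor, prod_ite, filter_mem_eq_inter, univ_inter,
    filter_notMem_eq_sdiff]

lemma measureReal_sum_eq_prob (hmeas : ∀ i, Measurable (z i)) (hind : iIndepFun z μ)
    (hval : ∀ i ω, z i ω = 0 ∨ z i ω = 1) (hs : ∀ i, μ.real {ω | z i ω = 1} = s i) (k : ℕ) :
    μ.real {ω | ∑ j, z j ω = k} = prob s univ k := by
  have hevent : {ω | ∑ j, z j ω = k}
      = (fun ω => ({j | z j ω = 1} : Finset ι)) ⁻¹' ↑(powersetCard k (univ : Finset ι)) := by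
    ext ω
    have hcount : ∑ j, z j ω = #{j | z j ω = 1} := by
      rw [card_filter]
      exact sum_congr rfl fun j _ => by rcases hval j ω with h | h <;> simp [h]
    simp [hcount, mem_powersetCard]
  have hfiber : ∀ T, MeasurableSet ((fun ω => ({j | z j ω = 1} : Finset ι)) ⁻¹' {T}) := by
    intro T
    rw [preimage_filter_eq_one_eq_iInter]
    refine MeasurableSet.iInter fun j => hmeas j ?_
    split_ifs
    exacts [measurableSet_singleton 1, (measurableSet_singleton 1).compl]
  rw [hevent, measureReal_def, ← sum_measure_preimage_singleton _ fun T _ => hfiber T,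
    ENNReal.toReal_sum fun _ _ => measure_ne_top _ _]
  exact sum_congr rfl fun T _ => measureReal_filter_eq_one_eq hmeas hind hs T

end Probability

end PoissonBinomial

lemma two_mul_max_sub_succ_le (H : ℝ) (k : ℕ) :
    2 * max (H - ↑(k + 1)) 0 ≤ max (H - k) 0 + max (H - ↑(k + 2)) 0 := by
  push_cast
  rcases le_total 0 (H - (k + 1)) with h | h
  · rw [max_eq_left h]
    linarith [le_max_left (H - k) 0, le_max_left (H - (k + 2)) 0]
  · rw [max_eq_right h]
    linarith [le_max_right (H - k) 0, le_max_right (H - (k + 2)) 0]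

open MeasureTheory ProbabilityTheory Finset PoissonBinomial

theorem stmt_13_general {Ω : Type*} [MeasurableSpace Ω] (μ : Measure Ω)
    [IsProbabilityMeasure μ] (n H : ℕ)
    (z : Fin n → Ω → ℕ) (s : Fin n → ℝ)
    (hmeas : ∀ i, Measurable (z i))
    (hind : iIndepFun z μ)
    (hval : ∀ i ω, z i ω = 0 ∨ z i ω = 1)
    (hs : ∀ i, (μ {ω | z i ω = 1}).toReal = s i)
    (hs01 : ∀ i, s i ∈ Set.Icc (0:ℝ) 1) (S : ℝ) (hS : S = ∑ i, s i) :
    ∑ i ∈ Finset.range H, ((H : ℝ) - i) * (μ {ω | (∑ j, z j ω) = i}).toReal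
      ≤ ∑ i ∈ Finset.range H,
          ((H : ℝ) - i) * (n.choose i) * (S / n) ^ i * (1 - S / n) ^ (n - i) := by
  set g : ℕ → ℝ := fun k => max ((H : ℝ) - k) 0
  have hg_ge : ∀ k, H ≤ k → g k = 0 := fun k hk =>
    max_eq_right (sub_nonpos.2 (Nat.cast_le.2 hk))
  have hg_lt : ∀ k ∈ range H, g k = H - k := fun k hk =>
    max_eq_left (sub_nonneg.2 (Nat.cast_le.2 (mem_range.1 hk).le))
  have hmean : ∑ i, s i = ∑ _i : Fin n, S / n := by
    rcases n.eq_zero_or_pos with rfl | hn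
    · simp
    · rw [sum_const, card_univ, Fintype.card_fin, nsmul_eq_mul, ← hS]
      field_simp
  calc ∑ k ∈ range H, ((H : ℝ) - k) * (μ {ω | (∑ j, z j ω) = k}).toReal
      = ∑ k ∈ range H, g k * prob s univ k := sum_congr rfl fun k hk => by
        rw [hg_lt k hk, ← measureReal_sum_eq_prob hmeas hind hval hs k, measureReal_def]
    _ = expect g s univ := (expect_eq_sum_prob hg_ge).symm
    _ ≤ expect g (fun _ => S / n) univ :=
        expect_le_expect_const (two_mul_max_sub_succ_le H) hs01 hmean
    _ = ∑ k ∈ range H, g k * prob (fun _ => S / n) univ k := expect_eq_sum_prob hg_ge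
    _ = _ := sum_congr rfl fun k hk => by
        rw [hg_lt k hk, prob_const, card_univ, Fintype.card_fin]
        ring

theorem stmt_13 {Ω : Type*} [MeasurableSpace Ω] (μ : Measure Ω)
    [IsProbabilityMeasure μ] (n H : ℕ) (hn : 0 < n) (hH : 0 < H) (hHn : H ≤ n)
    (z : Fin n → Ω → ℕ) (s : Fin n → ℝ)
    (hmeas : ∀ i, Measurable (z i))
    (hind : iIndepFun z μ)
    (hval : ∀ i ω, z i ω = 0 ∨ z i ω = 1)
    (hs : ∀ i, (μ {ω | z i ω = 1}).toReal = s i)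
    (hs01 : ∀ i, s i ∈ Set.Icc (0:ℝ) 1) (S : ℝ) (hS : S = ∑ i, s i) :
    ∑ i ∈ Finset.range H, ((H : ℝ) - i) * (μ {ω | (∑ j, z j ω) = i}).toReal
      ≤ ∑ i ∈ Finset.range H,
          ((H : ℝ) - i) * (n.choose i) * (S / n) ^ i * (1 - S / n) ^ (n - i) :=
  stmt_13_general μ n H z s hmeas hind hval hs hs01 S hS
end

section
/- Suppose x_i^j ∈ [0,1] for all i, j ∈ [n], and for each j ∈ [n], ∑_{i∈[n]} x_i^j ≤ j. If α_1 ≥ α_2 ≥ ... ≥ α_n ≥ 0 and α_{n+1} = 0, then x_i := ∑_{j∈[n]} (α_j − α_{j+1}) x_i^j satisfies ∑_{i∈S} x_i ≤ ∑_{j=1}^{|S|} α_j for every subset S ⊆ [n]. -/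
/-!
Exchanging the two sums, the left-hand side becomes `∑ⱼ (αⱼ - αⱼ₊₁) ∑_{i ∈ S} xᵢʲ`. The weights
`αⱼ - αⱼ₊₁` are nonnegative, and the inner sum is at most `j` (column bound) and at most `|S|`
(entries `≤ 1`), hence at most `min j |S|`. Abel summation turns
`∑ⱼ (αⱼ - αⱼ₊₁) min j |S|` into `α₁ + ⋯ + α_{|S|}`, using `αₙ₊₁ = 0`.
-/

open Finset

theorem Finset.sum_Icc_sub_succ_mul_min {R : Type*} [CommRing R] (f : ℕ → R) {k n : ℕ}
    (hk : k ≤ n) :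
    ∑ j ∈ Icc 1 n, (f j - f (j + 1)) * ((min j k : ℕ) : R)
      = ∑ j ∈ Icc 1 k, f j - k * f (n + 1) := by
  induction n generalizing k with
  | zero =>
    obtain rfl : k = 0 := by omega
    simp
  | succ n ih =>
    rw [sum_Icc_succ_top (by omega)]
    rcases hk.lt_or_eq with hk | rfl
    · rw [ih (by omega), min_eq_right hk.le]
      ring
    · have hmin : ∀ j ∈ Icc 1 n, min j (n + 1) = min j n := fun j hj => by
        rw [mem_Icc] at hj; omega
      rw [sum_congr rfl fun j hj => by rw [hmin j hj], ih le_rfl, min_self,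
        sum_Icc_succ_top (by omega)]
      push_cast
      ring

theorem Finset.sum_le_min_card {ι R : Type*} [Semiring R] [LinearOrder R] [IsOrderedRing R]
    {s t : Finset ι} {x : ι → R} {c : R} (hst : s ⊆ t) (h0 : ∀ i ∈ t, 0 ≤ x i)
    (h1 : ∀ i ∈ s, x i ≤ 1) (ht : ∑ i ∈ t, x i ≤ c) :
    ∑ i ∈ s, x i ≤ min c #s :=
  le_min ((sum_le_sum_of_subset_of_nonneg hst fun i hi _ => h0 i hi).trans ht)
    (by simpa using sum_le_card_nsmul s x 1 h1)

theorem stmt_18_general (n : ℕ) (α : ℕ → ℝ)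
    (hmono : ∀ j, 1 ≤ j → j ≤ n → α (j + 1) ≤ α j)
    (htop : α (n + 1) = 0)
    (x : ℕ → ℕ → ℝ)
    (hx01 : ∀ i ∈ Finset.Icc 1 n, ∀ j ∈ Finset.Icc 1 n, x i j ∈ Set.Icc (0:ℝ) 1)
    (hcol : ∀ j ∈ Finset.Icc 1 n, ∑ i ∈ Finset.Icc 1 n, x i j ≤ (j : ℝ)) :
    ∀ S ⊆ Finset.Icc 1 n,
      ∑ i ∈ S, (∑ j ∈ Finset.Icc 1 n, (α j - α (j + 1)) * x i j)
        ≤ ∑ j ∈ Finset.Icc 1 S.card, α j := by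
  intro S hS
  have hcard : #S ≤ n := by simpa using card_le_card hS
  calc ∑ i ∈ S, ∑ j ∈ Icc 1 n, (α j - α (j + 1)) * x i j
      = ∑ j ∈ Icc 1 n, (α j - α (j + 1)) * ∑ i ∈ S, x i j := by
        rw [sum_comm]
        simp_rw [mul_sum]
    _ ≤ ∑ j ∈ Icc 1 n, (α j - α (j + 1)) * ((min j #S : ℕ) : ℝ) := by
        refine sum_le_sum fun j hj => mul_le_mul_of_nonneg_left ?_ ?_
        · rw [Nat.cast_min]
          exact sum_le_min_card hS (fun i hi => (hx01 i hi j hj).1)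
            (fun i hi => (hx01 i (hS hi) j hj).2) (hcol j hj)
        · rw [mem_Icc] at hj
          exact sub_nonneg.mpr (hmono j hj.1 hj.2)
    _ = ∑ j ∈ Icc 1 #S, α j := by
        rw [sum_Icc_sub_succ_mul_min α hcard, htop, mul_zero, sub_zero]

theorem stmt_18 (n : ℕ) (hn : 1 ≤ n) (α : ℕ → ℝ)
    (hmono : ∀ j, 1 ≤ j → j ≤ n → α (j + 1) ≤ α j)
    (hnonneg : 0 ≤ α n) (htop : α (n + 1) = 0)
    (x : ℕ → ℕ → ℝ)
    (hx01 : ∀ i ∈ Finset.Icc 1 n, ∀ j ∈ Finset.Icc 1 n, x i j ∈ Set.Icc (0:ℝ) 1)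
    (hcol : ∀ j ∈ Finset.Icc 1 n, ∑ i ∈ Finset.Icc 1 n, x i j ≤ (j : ℝ)) :
    ∀ S ⊆ Finset.Icc 1 n,
      ∑ i ∈ S, (∑ j ∈ Finset.Icc 1 n, (α j - α (j + 1)) * x i j)
        ≤ ∑ j ∈ Finset.Icc 1 S.card, α j :=
  stmt_18_general n α hmono htop x hx01 hcol
end
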